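/- Let B be a C*-algebra, E a Hilbert B-module, I a closed two-sided ideal of B, and K the closed linear span of {x·i : x ∈ E, i ∈ I}. Let K^⊥ = {x ∈ E : ⟨x,k⟩ = 0 for all k ∈ K} and K^⊥⊥ = (K^⊥)^⊥. Then I is essential for the range algebra of K^⊥⊥: for every b in the closed linear span of {⟨x,y⟩ : x, y ∈ K^⊥⊥}, if b·i = 0 for all i ∈ I then b = 0. -/

import Mathlib

open scoped RightActions

/-- The closed linear span of a subset of a topological `ℂ`-module. -/
noncomputable def clSpan {M : Type*} [AddCommMonoid M] [Module ℂ M] [TopologicalSpace M]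
    (S : Set M) : Set M :=
  closure (Submodule.span ℂ S : Set M)

/-- A subset is a (complex) linear subspace. -/
def IsLinearSubspace {M : Type*} [AddCommMonoid M] [Module ℂ M] (K : Set M) : Prop :=
  (0 : M) ∈ K ∧ (∀ x ∈ K, ∀ y ∈ K, x + y ∈ K) ∧ ∀ (c : ℂ), ∀ x ∈ K, c • x ∈ K

/-- A closed two-sided ideal of a C*-algebra `B`. -/
structure IsClosedTwoSidedIdeal {B : Type*} [NonUnitalCStarAlgebra B] (I : Set B) : Prop where
  isClosed : IsClosed I
  subspace : IsLinearSubspace I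
  mul_mem_left : ∀ (b : B), ∀ a ∈ I, b * a ∈ I
  mul_mem_right : ∀ (b : B), ∀ a ∈ I, a * b ∈ I

/-- The Hilbert C⋆-module class as it stood in Mathlib of December 2024 (right `Aᵐᵒᵖ`-action). -/
class CStarModuleRight (A E : Type*) [NonUnitalSemiring A] [StarRing A] [Module ℂ A]
    [AddCommGroup E] [Module ℂ E] [PartialOrder A] [SMul Aᵐᵒᵖ E] [Norm A] [Norm E]
    extends Inner A E where
  inner_add_right {x} {y} {z} : inner x (y + z) = inner x y + inner x z
  inner_self_nonneg {x} : 0 ≤ inner x x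
  inner_self {x} : inner x x = 0 ↔ x = 0
  inner_op_smul_right {a : A} {x y : E} : inner x (y <• a) = inner x y * a
  inner_smul_right_complex {z : ℂ} {x} {y} : inner x (z • y) = z • inner x y
  star_inner x y : star (inner x y) = inner y x
  norm_eq_sqrt_norm_inner_self x : ‖x‖ = Real.sqrt ‖inner x x‖

section HilbertModule

variable (B : Type*) [NonUnitalCStarAlgebra B] [PartialOrder B] [StarOrderedRing B]
variable {E : Type*} [NormedAddCommGroup E] [NormedSpace ℂ E] [SMul Bᵐᵒᵖ E] [CStarModuleRight B E]

/-- `K ⊆ E` is an *ideal submodule* if it is the closed linear span of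
`{x <• i : x ∈ E, i ∈ I}` for some closed two-sided ideal `I` of `B`. -/
def IsIdealSubmodule (K : Set E) : Prop :=
  ∃ I : Set B, IsClosedTwoSidedIdeal I ∧
    K = clSpan {z : E | ∃ x : E, ∃ i ∈ I, z = x <• i}

/-- A *ternary ideal* of a Hilbert `B`-module `E`: a linear subspace `K` with
`x <• ⟪k, y⟫ ∈ K` for all `x y ∈ E` and `k ∈ K`. -/
def IsTernaryIdeal (K : Set E) : Prop :=
  IsLinearSubspace K ∧ ∀ (x y : E), ∀ k ∈ K, x <• (inner B k y : B) ∈ K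

/-- `B_S`: the closed linear span in `B` of all inner products of elements of `S`. -/
noncomputable def rangeIdeal (S : Set E) : Set B :=
  clSpan {b : B | ∃ k ∈ S, ∃ k' ∈ S, b = (inner B k k' : B)}

/-- The orthogonal complement of a subset of a Hilbert `B`-module. -/
def perp (S : Set E) : Set E :=
  {x : E | ∀ s ∈ S, (inner B x s : B) = 0}

end HilbertModule

/-!
If `b` annihilates `I`, then `y <• b⋆` is orthogonal to every generator `x <• i` of `K`, since
`⟪y <• b⋆, x <• i⟫ = b * (⟪y, x⟫ * i)` and `⟪y, x⟫ * i ∈ I`; by continuity of the inner product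
(Cauchy–Schwarz) it is orthogonal to all of `K`. Hence `⟪x, y⟫ * b⋆ = ⟪x, y <• b⋆⟫ = 0` for
`x ∈ K^⊥⊥`, so `c * b⋆ = 0` for every `c` in the range algebra of `K^⊥⊥`; in particular
`b * b⋆ = 0`, which forces `b = 0`.
-/

namespace CStarModuleRight

section Algebraic

variable (B : Type*) [NonUnitalCStarAlgebra B] [PartialOrder B]
variable {E : Type*} [AddCommGroup E] [Module ℂ E] [Norm E] [SMul Bᵐᵒᵖ E] [CStarModuleRight B E]

noncomputable def innerRight (x : E) : E →ₗ[ℂ] B where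
  toFun := inner B x
  map_add' _ _ := inner_add_right
  map_smul' _ _ := inner_smul_right_complex

variable {B}

lemma inner_zero_right (x : E) : inner B x (0 : E) = 0 :=
  (innerRight B x).map_zero

lemma inner_zero_left (y : E) : inner B (0 : E) y = 0 := by
  rw [← star_inner, inner_zero_right, star_zero]

lemma inner_sub_right (x y z : E) : inner B x (y - z) = inner B x y - inner B x z :=
  (innerRight B x).map_sub y z

lemma inner_sub_left (x y z : E) : inner B (x - y) z = inner B x z - inner B y z := by
  rw [← star_inner, inner_sub_right, star_sub, star_inner, star_inner]

lemma inner_smul_left_complex (c : ℂ) (x y : E) : inner B (c • x) y = star c • inner B x y := by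
  rw [← star_inner, inner_smul_right_complex, star_smul, star_inner]

lemma inner_op_smul_left (a : B) (x y : E) : inner B (x <• a) y = star a * inner B x y := by
  rw [← star_inner, inner_op_smul_right, star_mul, star_inner]

end Algebraic

section Norm

variable {B : Type*} [NonUnitalCStarAlgebra B] [PartialOrder B] [StarOrderedRing B]
variable {E : Type*} [NormedAddCommGroup E] [NormedSpace ℂ E] [SMul Bᵐᵒᵖ E] [CStarModuleRight B E]

omit [StarOrderedRing B] in
lemma norm_sq_eq (x : E) : ‖x‖ ^ 2 = ‖(inner B x x : B)‖ := by
  rw [norm_eq_sqrt_norm_inner_self (A := B) x, Real.sq_sqrt (norm_nonneg _)]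

lemma inner_mul_inner_swap_le (x y : E) :
    inner B y x * inner B x y ≤ ‖x‖ ^ 2 • (inner B y y : B) := by
  rcases eq_or_ne x 0 with rfl | hx
  · simp [inner_zero_left]
  have hr : 0 < ‖x‖ ^ 2 := by positivity
  have hstar : star (inner B x y) = (inner B y x : B) := star_inner x y
  -- Expand `0 ≤ ⟪x <• ⟪x, y⟫ - ‖x‖² • y, x <• ⟪x, y⟫ - ‖x‖² • y⟫`.
  have h₀ : (0 : B) ≤ inner B y x * inner B x x * inner B x y
      - ‖x‖ ^ 2 • (inner B y x * inner B x y) - ‖x‖ ^ 2 • (inner B y x * inner B x y)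
      + ‖x‖ ^ 2 • ‖x‖ ^ 2 • (inner B y y : B) := by
    have := inner_self_nonneg (A := B) (x := x <• inner B x y - ((‖x‖ ^ 2 : ℝ) : ℂ) • y)
    rw [inner_sub_left, inner_sub_right, inner_sub_right, inner_op_smul_left, inner_op_smul_left,
      inner_smul_left_complex, inner_smul_left_complex, inner_op_smul_right, inner_op_smul_right,
      inner_smul_right_complex, inner_smul_right_complex, hstar, Complex.star_def,
      Complex.conj_ofReal] at this
    simp only [Complex.coe_smul, mul_smul_comm, mul_assoc] at this ⊢
    convert this using 1
    abel
  have hconj : inner B y x * inner B x x * inner B x y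
      ≤ ‖x‖ ^ 2 • (inner B y x * inner B x y) := by
    rw [← hstar, norm_sq_eq (B := B) x]
    exact CStarAlgebra.star_left_conjugate_le_norm_smul (hb := star_inner x x)
  have h₁ : ‖x‖ ^ 2 • (inner B y x * inner B x y) ≤ ‖x‖ ^ 2 • ‖x‖ ^ 2 • (inner B y y : B) := by
    have := h₀.trans (add_le_add_left (sub_le_sub_right (sub_le_sub_right hconj _) _) _)
    rwa [sub_self, zero_sub, neg_add_eq_sub, sub_nonneg] at this
  exact (smul_le_smul_iff_of_pos_left hr).mp h₁

lemma norm_inner_le (x y : E) : ‖(inner B x y : B)‖ ≤ ‖x‖ * ‖y‖ := by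
  have h : ‖(inner B x y : B)‖ ^ 2 ≤ (‖x‖ * ‖y‖) ^ 2 :=
    calc ‖(inner B x y : B)‖ ^ 2 = ‖inner B y x * inner B x y‖ := by
          rw [← star_inner x y, CStarRing.norm_star_mul_self, pow_two]
      _ ≤ ‖‖x‖ ^ 2 • (inner B y y : B)‖ := by
          refine CStarAlgebra.norm_le_norm_of_nonneg_of_le ?_ (inner_mul_inner_swap_le x y)
          rw [← star_inner x y]
          exact star_mul_self_nonneg _
      _ = (‖x‖ * ‖y‖) ^ 2 := by
          rw [norm_smul, Real.norm_of_nonneg (by positivity), ← norm_sq_eq, mul_pow]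
  exact (pow_le_pow_iff_left₀ (norm_nonneg _) (by positivity) two_ne_zero).mp h

variable (B) in
noncomputable def innerRightCLM (x : E) : E →L[ℂ] B :=
  (innerRight B x).mkContinuous ‖x‖ (norm_inner_le x)

end Norm

end CStarModuleRight

open CStarModuleRight

lemma clSpan_subset {M : Type*} [AddCommMonoid M] [Module ℂ M] [TopologicalSpace M]
    {S : Set M} {P : Submodule ℂ M} (hP : IsClosed (P : Set M)) (hS : S ⊆ P) :
    clSpan S ⊆ P :=
  closure_minimal (Submodule.span_le.mpr hS) hP

section Orthogonality

variable {B : Type*} [NonUnitalCStarAlgebra B] [PartialOrder B] [StarOrderedRing B]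
variable {E : Type*} [NormedAddCommGroup E] [NormedSpace ℂ E] [SMul Bᵐᵒᵖ E] [CStarModuleRight B E]

lemma perp_clSpan (S : Set E) : perp B (clSpan S) = perp B S := by
  refine Set.Subset.antisymm (fun x hx s hs => hx s (subset_closure (Submodule.subset_span hs)))
    fun x hx => ?_
  have hker : clSpan S ⊆ LinearMap.ker (innerRightCLM B x : E →ₗ[ℂ] B) :=
    clSpan_subset (ContinuousLinearMap.isClosed_ker _) fun s hs => hx s hs
  exact fun s hs => hker hs

lemma op_smul_star_mem_perp_clSpan_of_mul_eq_zero {I : Set B}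
    (hI : ∀ (c : B), ∀ a ∈ I, c * a ∈ I) {b : B} (hb : ∀ i ∈ I, b * i = 0) (y : E) :
    y <• star b ∈ perp B (clSpan {z : E | ∃ x : E, ∃ i ∈ I, z = x <• i}) := by
  rw [perp_clSpan]
  rintro _ ⟨x, i, hi, rfl⟩
  rw [inner_op_smul_left, star_star, inner_op_smul_right]
  exact hb _ (hI _ _ hi)

omit [StarOrderedRing B] in
lemma mul_eq_zero_of_mem_rangeIdeal {S : Set E} {a : B}
    (h : ∀ x ∈ S, ∀ y ∈ S, inner B x y * a = 0) {c : B} (hc : c ∈ rangeIdeal B S) :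
    c * a = 0 := by
  have hker : rangeIdeal B S ⊆ LinearMap.ker (LinearMap.mulRight ℂ a) :=
    clSpan_subset (isClosed_eq (continuous_mul_const a) continuous_const) <| by
      rintro _ ⟨x, hx, y, hy, rfl⟩
      exact h x hx y hy
  exact hker hc

end Orthogonality

theorem essential_for_biorthogonal_complement_general
    {B : Type*} [NonUnitalCStarAlgebra B] [PartialOrder B] [StarOrderedRing B]
    {E : Type*} [NormedAddCommGroup E] [NormedSpace ℂ E] [SMul Bᵐᵒᵖ E]
    [CStarModuleRight B E] (I : Set B) (hI : IsClosedTwoSidedIdeal I)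
    (K : Set E) (hKdef : K = clSpan {z : E | ∃ x : E, ∃ i ∈ I, z = x <• i}) :
    ∀ b ∈ rangeIdeal B (perp B (perp B K)), (∀ i ∈ I, b * i = 0) → b = 0 := by
  intro b hb hbI
  have hperp : ∀ y : E, y <• star b ∈ perp B K := fun y =>
    hKdef ▸ op_smul_star_mem_perp_clSpan_of_mul_eq_zero hI.mul_mem_left hbI y
  have hbb : b * star b = 0 := mul_eq_zero_of_mem_rangeIdeal (fun x hx y _ => by
    rw [← inner_op_smul_right]
    exact hx _ (hperp y)) hb
  exact (CStarRing.mul_star_self_eq_zero_iff b).mp hbb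

/-- for a closed two-sided ideal `I` of `B` with associated ideal submodule
`K`, the ideal `I` is essential for the range algebra of `K^⊥⊥`. -/
theorem essential_for_biorthogonal_complement
    {B : Type*} [NonUnitalCStarAlgebra B] [PartialOrder B] [StarOrderedRing B]
    {E : Type*} [NormedAddCommGroup E] [NormedSpace ℂ E] [SMul Bᵐᵒᵖ E]
    [CStarModuleRight B E] [CompleteSpace E] (I : Set B) (hI : IsClosedTwoSidedIdeal I)
    (K : Set E) (hKdef : K = clSpan {z : E | ∃ x : E, ∃ i ∈ I, z = x <• i}) :
    ∀ b ∈ rangeIdeal B (perp B (perp B K)), (∀ i ∈ I, b * i = 0) → b = 0 :=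
  essential_for_biorthogonal_complement_general I hI K hKdef
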